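/- Let β, r, θ, c > 0 with β > r and 0 < θ < (β - r)(1+c), and let (ū, 1-ū) with 0 < ū < 1 be the unique positive fixed point of V₁ (so θ = (β ū - r)(1 + c ū)/ū). Set q(ū) = 1 - ū + ū(1-ū)(β - θ/(1 + c ū)²), and let λ₁, λ₂ be the complex eigenvalues of the Jacobian matrix of V₁ at (ū, 1-ū). Then: if q(ū) < 1 both eigenvalues satisfy |λᵢ| < 1 (the fixed point is attractive); if q(ū) > 1 both satisfy |λᵢ| > 1 (repelling); and if q(ū) = 1 then λ₁, λ₂ are a complex-conjugate pair with |λ₁| = |λ₂| = 1 (nonhyperbolic). -/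

import Mathlib

/-- The Jacobian matrix of `V₁(u,v) = (u(2-u) - uv, βuv + (1-r)v - θuv/(1+cu))`
at the point `(u,v)`. -/
noncomputable def J1 (β r θ c : ℝ) (u v : ℝ) : Matrix (Fin 2) (Fin 2) ℝ :=
  !![2 - 2 * u - v, -u;
     β * v - θ * v / (1 + c * u) ^ 2,
     β * u + 1 - r - θ * u / (1 + c * u)]

/-!
At the fixed point the Jacobian has trace `2 - ū` and determinant `q`, and the fixed-point
equation turns `q - (1 - ū)` into `(1 - ū)(βcū² + r)/(1 + cū) > 0`. For a real quadratic
`z² - tz + d`, a non-real root has `|z|² = d`, while real roots lie in `(-1, 1)` under Jury's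
conditions `d < 1`, `|t| < 1 + d`; here `|t| < 2 ≤ 2√d` when `d ≥ 1`, so the roots are then a
conjugate pair of modulus `√d`.
-/

open Complex Polynomial
open scoped ComplexConjugate

section RealQuadratic

variable {t d : ℝ} {z : ℂ}

lemma im_eq_zero_or_normSq_eq_of_quadratic_root (hz : z ^ 2 - t * z + d = 0) :
    z.im = 0 ∨ normSq z = d := by
  have hre := congrArg re hz
  have him := congrArg im hz
  simp only [sq, sub_re, add_re, mul_re, ofReal_re, ofReal_im, sub_im, add_im, mul_im,
    zero_re, zero_im] at hre him
  refine or_iff_not_imp_left.2 fun hz_im => ?_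
  have ht : 2 * z.re = t := by
    apply mul_left_cancel₀ hz_im
    linear_combination him
  rw [normSq_apply]
  linear_combination -hre + z.re * ht

lemma abs_lt_one_of_quadratic_root {x : ℝ} (hx : x ^ 2 - t * x + d = 0)
    (hd : d < 1) (ht : |t| < 1 + d) : |x| < 1 := by
  rw [abs_lt] at ht ⊢
  constructor <;> nlinarith

lemma norm_lt_one_of_quadratic_root (hz : z ^ 2 - t * z + d = 0)
    (hd : d < 1) (ht : |t| < 1 + d) : ‖z‖ < 1 := by
  rcases im_eq_zero_or_normSq_eq_of_quadratic_root hz with hz_im | hz_norm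
  · have hre := congrArg re hz
    simp only [sq, sub_re, add_re, mul_re, ofReal_re, ofReal_im, hz_im, zero_re] at hre
    rw [← abs_re_eq_norm.2 hz_im]
    exact abs_lt_one_of_quadratic_root (by linear_combination hre) hd ht
  · rw [← sq_lt_one_iff₀ (norm_nonneg z), Complex.sq_norm, hz_norm]
    exact hd

lemma exists_quadratic_roots_eq_conj (h : t ^ 2 < 4 * d) :
    ∃ μ : ℂ, μ.im ≠ 0 ∧ normSq μ = d ∧
      ∀ z : ℂ, z ^ 2 - t * z + d = 0 ↔ z = μ ∨ z = conj μ := by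
  set s := √(4 * d - t ^ 2)
  have hs : s ^ 2 = 4 * d - t ^ 2 := Real.sq_sqrt (by linarith)
  have hs_pos : 0 < s := Real.sqrt_pos.2 (by linarith)
  refine ⟨⟨t / 2, s / 2⟩, by simp [hs_pos.ne'], ?_, fun z => ?_⟩
  · rw [normSq_mk]
    linear_combination hs / 4
  have hdisc : discrim (1 : ℂ) (-t) d = (s * I) * (s * I) := by
    have hs' : (s : ℂ) ^ 2 = 4 * d - t ^ 2 := by exact_mod_cast hs
    rw [discrim]
    linear_combination hs' - (s : ℂ) ^ 2 * I_sq
  have hplus : (-(-t : ℂ) + s * I) / (2 * 1) = ⟨t / 2, s / 2⟩ := by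
    apply Complex.ext <;> simp
  have hminus : (-(-t : ℂ) - s * I) / (2 * 1) = conj ⟨t / 2, s / 2⟩ := by
    apply Complex.ext <;> simp [neg_div]
  rw [show z ^ 2 - t * z + d = 1 * (z * z) + -(t : ℂ) * z + d by ring,
    quadratic_eq_zero_iff one_ne_zero hdisc, hplus, hminus]

lemma one_lt_norm_of_quadratic_root (hz : z ^ 2 - t * z + d = 0)
    (hd : 1 < d) (ht : |t| ≤ 2) : 1 < ‖z‖ := by
  have hdisc : t ^ 2 < 4 * d := by nlinarith [sq_abs t, abs_nonneg t]
  obtain ⟨μ, -, hμ, hroots⟩ := exists_quadratic_roots_eq_conj hdisc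
  have hz_norm : normSq z = d := by
    rcases (hroots z).1 hz with rfl | rfl
    · exact hμ
    · rwa [normSq_conj]
  rwa [← one_lt_sq_iff₀ (norm_nonneg z), Complex.sq_norm, hz_norm]

end RealQuadratic

section FixedPoint

variable {β r θ c u : ℝ}

/- `hfix` is the second fixed-point equation `βu + 1 - r - θu/(1 + cu) = 1` divided by `v`,
so the lower right entry of the Jacobian is `1`. -/
lemma trace_J1_of_fixed (hfix : β * u - r = θ * u / (1 + c * u)) :
    (J1 β r θ c u (1 - u)).trace = 2 - u := by
  rw [J1, Matrix.trace_fin_two_of]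
  linear_combination hfix

lemma det_J1_of_fixed (hfix : β * u - r = θ * u / (1 + c * u)) :
    (J1 β r θ c u (1 - u)).det = 1 - u + u * (1 - u) * (β - θ / (1 + c * u) ^ 2) := by
  rw [J1, Matrix.det_fin_two_of]
  linear_combination (1 - u) * hfix

lemma sub_div_sq_pos_of_fixed (hβ : 0 ≤ β) (hr : 0 < r) (hc : 0 ≤ c) (hu : 0 < u)
    (hfix : β * u - r = θ * u / (1 + c * u)) :
    0 < β - θ / (1 + c * u) ^ 2 := by
  have hcu : 0 < 1 + c * u := by positivity
  have hθ : θ = (β * u - r) * (1 + c * u) / u := by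
    rw [hfix]; field_simp
  rw [show β - θ / (1 + c * u) ^ 2 = (β * c * u ^ 2 + r) / (u * (1 + c * u)) by
    rw [hθ]; field_simp; ring]
  positivity

end FixedPoint

theorem stability_positive_fixed_point_V1_general (β r θ c u : ℝ)
    (hβ : 0 < β) (hr : 0 < r) (hc : 0 < c)
    (hu0 : 0 < u) (hu1 : u < 1)
    (hfix : θ = (β * u - r) * (1 + c * u) / u)
    (q : ℝ) (hq : q = 1 - u + u * (1 - u) * (β - θ / (1 + c * u) ^ 2)) :
    (q < 1 → ∀ l : ℂ,
        Polynomial.aeval l (J1 β r θ c u (1 - u)).charpoly = 0 → ‖l‖ < 1) ∧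
    (1 < q → ∀ l : ℂ,
        Polynomial.aeval l (J1 β r θ c u (1 - u)).charpoly = 0 → 1 < ‖l‖) ∧
    (q = 1 → ∃ μ : ℂ, μ.im ≠ 0 ∧ ‖μ‖ = 1 ∧
        ∀ l : ℂ, Polynomial.aeval l (J1 β r θ c u (1 - u)).charpoly = 0 ↔
          (l = μ ∨ l = (starRingEnd ℂ) μ)) := by
  have hfix' : β * u - r = θ * u / (1 + c * u) := by
    rw [hfix]; field_simp
  have hcharpoly (l : ℂ) :
      aeval l (J1 β r θ c u (1 - u)).charpoly = l ^ 2 - ((2 - u : ℝ) : ℂ) * l + q := by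
    simp [Matrix.charpoly_fin_two, trace_J1_of_fixed hfix', det_J1_of_fixed hfix', hq]
  have htrace : |2 - u| ≤ 2 := by rw [abs_le]; constructor <;> linarith
  have hq_gt : 1 - u < q := by
    rw [hq]
    linarith [mul_pos (mul_pos hu0 (sub_pos.2 hu1))
      (sub_div_sq_pos_of_fixed hβ.le hr hc.le hu0 hfix')]
  refine ⟨fun hq1 l hl => ?_, fun hq1 l hl => ?_, fun hq1 => ?_⟩
  · exact norm_lt_one_of_quadratic_root (hcharpoly l ▸ hl) hq1
      (by rw [abs_of_pos (by linarith)]; linarith)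
  · exact one_lt_norm_of_quadratic_root (hcharpoly l ▸ hl) hq1 htrace
  · obtain ⟨μ, hμ_im, hμ, hroots⟩ := exists_quadratic_roots_eq_conj (t := 2 - u) (d := q)
      (by nlinarith [sq_abs (2 - u), abs_nonneg (2 - u)])
    refine ⟨μ, hμ_im, ?_, fun l => by rw [hcharpoly, hroots]⟩
    rw [Complex.norm_def, hμ, hq1, Real.sqrt_one]

/-- Stability classification of the unique positive fixed point `(ū, 1-ū)` of `V₁`:
with `q(ū) = 1 - ū + ū(1-ū)(β - θ/(1+cū)²)`, if `q(ū) < 1` the two complex eigenvalues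
of the Jacobian at `(ū, 1-ū)` have modulus `< 1` (attractive), if `q(ū) > 1` they have
modulus `> 1` (repelling), and if `q(ū) = 1` they form a complex-conjugate pair of
modulus `1` (nonhyperbolic). -/
theorem stability_positive_fixed_point_V1 (β r θ c u : ℝ)
    (hβ : 0 < β) (hr : 0 < r) (hθ : 0 < θ) (hc : 0 < c)
    (hβr : r < β) (hθub : θ < (β - r) * (1 + c))
    (hu0 : 0 < u) (hu1 : u < 1)
    (hfix : θ = (β * u - r) * (1 + c * u) / u)
    (q : ℝ) (hq : q = 1 - u + u * (1 - u) * (β - θ / (1 + c * u) ^ 2)) :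
    (q < 1 → ∀ l : ℂ,
        Polynomial.aeval l (J1 β r θ c u (1 - u)).charpoly = 0 → ‖l‖ < 1) ∧
    (1 < q → ∀ l : ℂ,
        Polynomial.aeval l (J1 β r θ c u (1 - u)).charpoly = 0 → 1 < ‖l‖) ∧
    (q = 1 → ∃ μ : ℂ, μ.im ≠ 0 ∧ ‖μ‖ = 1 ∧
        ∀ l : ℂ, Polynomial.aeval l (J1 β r θ c u (1 - u)).charpoly = 0 ↔
          (l = μ ∨ l = (starRingEnd ℂ) μ)) :=
  stability_positive_fixed_point_V1_general β r θ c u hβ hr hc hu0 hu1 hfix q hq
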